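/- arXiv:2206.01726 — 4 statements merged into one kernel-verified Lean document; each statement's English description precedes it below -/
import Mathlib

section
/- Let F be a subspace of R^k and v1, v2 ∈ R^k be vectors such that dim span(F ∪ {v1, v2}) = dim F + 2. Let F1 = span(F ∪ {v1}) and F2 = span(F ∪ {v2}). Then dist(v1, F) ≤ dist(v1, F2) · ‖v2‖ / dist(v2, F1). -/
open Metric Submodule Module RealInnerProductSpace

variable {E : Type*} [NormedAddCommGroup E] [InnerProductSpace ℝ E]

/-- If `w ∈ S` and `v - w` is orthogonal to `S`, then `infDist v S = ‖v - w‖`. -/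
lemma aux_infDist_eq (S : Submodule ℝ E) (v w : E) (hw : w ∈ S)
    (h : ∀ u ∈ S, ⟪v - w, u⟫ = 0) :
    Metric.infDist v (S : Set E) = ‖v - w‖ := by
  have hne : (S : Set E).Nonempty := ⟨0, S.zero_mem⟩
  have : Nonempty (S : Set E) := hne.to_subtype
  rw [Metric.infDist_eq_iInf]
  simp only [dist_eq_norm]
  exact ((norm_eq_iInf_iff_inner_eq_zero S hw).2 h).symm

set_option maxHeartbeats 1000000 in
/-- If `dim span(F ∪ {v₁, v₂}) = dim F + 2`, `F₁ = span(F ∪ {v₁})`, `F₂ = span(F ∪ {v₂})`,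
then `dist(v₁, F) ≤ dist(v₁, F₂) · ‖v₂‖ / dist(v₂, F₁)`. -/
theorem stmt1 {k : ℕ} (F : Submodule ℝ (EuclideanSpace ℝ (Fin k)))
    (v₁ v₂ : EuclideanSpace ℝ (Fin k))
    (hdim : Module.finrank ℝ ↥(F ⊔ Submodule.span ℝ {v₁, v₂}) = Module.finrank ℝ ↥F + 2) :
    Metric.infDist v₁ (F : Set (EuclideanSpace ℝ (Fin k))) ≤
      Metric.infDist v₁ ((F ⊔ Submodule.span ℝ {v₂} : Submodule ℝ (EuclideanSpace ℝ (Fin k))) :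
          Set (EuclideanSpace ℝ (Fin k))) * ‖v₂‖ /
        Metric.infDist v₂ ((F ⊔ Submodule.span ℝ {v₁} : Submodule ℝ (EuclideanSpace ℝ (Fin k))) :
          Set (EuclideanSpace ℝ (Fin k))) := by
  -- non-membership facts
  have hsub : ∀ x y : EuclideanSpace ℝ (Fin k), y ∈ F ⊔ Submodule.span ℝ {x} →
      F ⊔ Submodule.span ℝ ({x, y} : Set (EuclideanSpace ℝ (Fin k))) =
        F ⊔ Submodule.span ℝ {x} := by
    intro x y hy
    refine le_antisymm ?_ (sup_le_sup_left (Submodule.span_mono (by simp)) F)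
    refine sup_le le_sup_left ?_
    rw [Submodule.span_insert]
    refine sup_le le_sup_right ?_
    rw [Submodule.span_le]
    intro z hz
    simp only [Set.mem_singleton_iff] at hz
    subst hz
    exact hy
  have hrank : ∀ x : EuclideanSpace ℝ (Fin k),
      Module.finrank ℝ ↥(F ⊔ Submodule.span ℝ ({x} : Set (EuclideanSpace ℝ (Fin k)))) ≤
      Module.finrank ℝ ↥F + 1 := by
    intro x
    refine le_trans (Submodule.finrank_add_le_finrank_add_finrank F _) ?_
    have h1 : Module.finrank ℝ
        ↥(Submodule.span ℝ ({x} : Set (EuclideanSpace ℝ (Fin k)))) ≤ 1 := by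
      rcases eq_or_ne x 0 with rfl | hx
      · rw [Submodule.span_zero_singleton]; simp
      · rw [finrank_span_singleton hx]
    omega
  have hv₂ : v₂ ∉ F ⊔ Submodule.span ℝ ({v₁} : Set (EuclideanSpace ℝ (Fin k))) := by
    intro h
    rw [hsub v₁ v₂ h] at hdim
    have := hrank v₁
    omega
  have hv₁ : v₁ ∉ F ⊔ Submodule.span ℝ ({v₂} : Set (EuclideanSpace ℝ (Fin k))) := by
    intro h
    have hpair : ({v₁, v₂} : Set (EuclideanSpace ℝ (Fin k))) = {v₂, v₁} := by
      ext z; simp [or_comm]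
    rw [hpair, hsub v₂ v₁ h] at hdim
    have := hrank v₂
    omega
  -- orthogonal components
  set p₁ : EuclideanSpace ℝ (Fin k) := (orthogonalProjection F v₁ : EuclideanSpace ℝ (Fin k))
    with hp₁
  set p₂ : EuclideanSpace ℝ (Fin k) := (orthogonalProjection F v₂ : EuclideanSpace ℝ (Fin k))
    with hp₂
  have hp₁F : p₁ ∈ F := (orthogonalProjection F v₁).2
  have hp₂F : p₂ ∈ F := (orthogonalProjection F v₂).2
  set a : EuclideanSpace ℝ (Fin k) := v₁ - p₁ with ha
  set b : EuclideanSpace ℝ (Fin k) := v₂ - p₂ with hb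
  have haF : ∀ u ∈ F, ⟪a, u⟫ = 0 := by
    intro u hu
    have := Submodule.sub_starProjection_mem_orthogonal (K := F) v₁
    rw [real_inner_comm]
    exact this u hu
  have hbF : ∀ u ∈ F, ⟪b, u⟫ = 0 := by
    intro u hu
    have := Submodule.sub_starProjection_mem_orthogonal (K := F) v₂
    rw [real_inner_comm]
    exact this u hu
  have ha0 : a ≠ 0 := by
    intro h
    apply hv₁
    have hv : v₁ = p₁ := by rwa [ha, sub_eq_zero] at h
    exact Submodule.mem_sup_left (hv ▸ hp₁F)
  have hb0 : b ≠ 0 := by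
    intro h
    apply hv₂
    have hv : v₂ = p₂ := by rwa [hb, sub_eq_zero] at h
    exact Submodule.mem_sup_left (hv ▸ hp₂F)
  -- the three distances
  have d0 : Metric.infDist v₁ (F : Set (EuclideanSpace ℝ (Fin k))) = ‖a‖ :=
    aux_infDist_eq F v₁ p₁ hp₁F haF
  set c₁ : ℝ := ⟪a, b⟫ / ‖b‖ ^ 2 with hc₁
  set c₂ : ℝ := ⟪a, b⟫ / ‖a‖ ^ 2 with hc₂
  have d12 : Metric.infDist v₁
      ((F ⊔ Submodule.span ℝ {v₂} : Submodule ℝ (EuclideanSpace ℝ (Fin k))) :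
        Set (EuclideanSpace ℝ (Fin k))) = ‖a - c₁ • b‖ := by
    have hwmem : (p₁ - c₁ • p₂) + c₁ • v₂ ∈
        F ⊔ Submodule.span ℝ ({v₂} : Set (EuclideanSpace ℝ (Fin k))) := by
      refine Submodule.add_mem _ (Submodule.mem_sup_left ?_) (Submodule.mem_sup_right ?_)
      · exact F.sub_mem hp₁F (F.smul_mem c₁ hp₂F)
      · exact Submodule.smul_mem _ c₁ (Submodule.mem_span_singleton_self v₂)
    have hdiff : v₁ - ((p₁ - c₁ • p₂) + c₁ • v₂) = a - c₁ • b := by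
      rw [ha, hb]; module
    have horth : ∀ u ∈ F ⊔ Submodule.span ℝ ({v₂} : Set (EuclideanSpace ℝ (Fin k))),
        ⟪v₁ - ((p₁ - c₁ • p₂) + c₁ • v₂), u⟫ = 0 := by
      intro u hu
      rcases Submodule.mem_sup.1 hu with ⟨f, hf, z, hz, rfl⟩
      rcases Submodule.mem_span_singleton.1 hz with ⟨t, rfl⟩
      rw [hdiff]
      have h1 : ⟪a - c₁ • b, f⟫ = 0 := by
        rw [inner_sub_left, haF f hf, real_inner_smul_left, hbF f hf]; ring
      have h2 : ⟪a - c₁ • b, b⟫ = 0 := by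
        rw [inner_sub_left, real_inner_smul_left, hc₁, real_inner_self_eq_norm_sq]
        have hB : ‖b‖ ^ 2 ≠ 0 := pow_ne_zero 2 (norm_ne_zero_iff.2 hb0)
        field_simp; ring
      have hp : ⟪a - c₁ • b, p₂⟫ = 0 := by
        rw [inner_sub_left, haF p₂ hp₂F, real_inner_smul_left, hbF p₂ hp₂F]; ring
      have h2' : ⟪a - c₁ • b, v₂⟫ = 0 := by
        have hv : v₂ = p₂ + b := by rw [hb]; abel
        rw [hv, inner_add_right, hp, h2]; ring
      rw [inner_add_right, h1, real_inner_smul_right, h2']; ring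
    rw [← hdiff]
    exact aux_infDist_eq _ v₁ _ hwmem horth
  have d21 : Metric.infDist v₂
      ((F ⊔ Submodule.span ℝ {v₁} : Submodule ℝ (EuclideanSpace ℝ (Fin k))) :
        Set (EuclideanSpace ℝ (Fin k))) = ‖b - c₂ • a‖ := by
    have hwmem : (p₂ - c₂ • p₁) + c₂ • v₁ ∈
        F ⊔ Submodule.span ℝ ({v₁} : Set (EuclideanSpace ℝ (Fin k))) := by
      refine Submodule.add_mem _ (Submodule.mem_sup_left ?_) (Submodule.mem_sup_right ?_)
      · exact F.sub_mem hp₂F (F.smul_mem c₂ hp₁F)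
      · exact Submodule.smul_mem _ c₂ (Submodule.mem_span_singleton_self v₁)
    have hdiff : v₂ - ((p₂ - c₂ • p₁) + c₂ • v₁) = b - c₂ • a := by
      rw [ha, hb]; module
    have horth : ∀ u ∈ F ⊔ Submodule.span ℝ ({v₁} : Set (EuclideanSpace ℝ (Fin k))),
        ⟪v₂ - ((p₂ - c₂ • p₁) + c₂ • v₁), u⟫ = 0 := by
      intro u hu
      rcases Submodule.mem_sup.1 hu with ⟨f, hf, z, hz, rfl⟩
      rcases Submodule.mem_span_singleton.1 hz with ⟨t, rfl⟩
      rw [hdiff]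
      have h1 : ⟪b - c₂ • a, f⟫ = 0 := by
        rw [inner_sub_left, hbF f hf, real_inner_smul_left, haF f hf]; ring
      have h2 : ⟪b - c₂ • a, a⟫ = 0 := by
        rw [inner_sub_left, real_inner_smul_left, hc₂, real_inner_self_eq_norm_sq,
          real_inner_comm b a]
        have hA : ‖a‖ ^ 2 ≠ 0 := pow_ne_zero 2 (norm_ne_zero_iff.2 ha0)
        field_simp; ring
      have hp : ⟪b - c₂ • a, p₁⟫ = 0 := by
        rw [inner_sub_left, hbF p₁ hp₁F, real_inner_smul_left, haF p₁ hp₁F]; ring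
      have h2' : ⟪b - c₂ • a, v₁⟫ = 0 := by
        have hv : v₁ = p₁ + a := by rw [ha]; abel
        rw [hv, inner_add_right, hp, h2]; ring
      rw [inner_add_right, h1, real_inner_smul_right, h2']; ring
    rw [← hdiff]
    exact aux_infDist_eq _ v₂ _ hwmem horth
  -- positivity of the denominator
  have hd21pos : 0 < Metric.infDist v₂
      ((F ⊔ Submodule.span ℝ {v₁} : Submodule ℝ (EuclideanSpace ℝ (Fin k))) :
        Set (EuclideanSpace ℝ (Fin k))) := by
    have hclosed : IsClosed
        ((F ⊔ Submodule.span ℝ {v₁} : Submodule ℝ (EuclideanSpace ℝ (Fin k))) :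
          Set (EuclideanSpace ℝ (Fin k))) :=
      Submodule.closed_of_finiteDimensional _
    have hne : ((F ⊔ Submodule.span ℝ {v₁} : Submodule ℝ (EuclideanSpace ℝ (Fin k))) :
        Set (EuclideanSpace ℝ (Fin k))).Nonempty := ⟨0, Submodule.zero_mem _⟩
    exact (hclosed.notMem_iff_infDist_pos hne).1 hv₂
  -- ‖b‖ ≤ ‖v₂‖
  have hb_le : ‖b‖ ≤ ‖v₂‖ := by
    have hle := Metric.infDist_le_dist_of_mem (x := v₂) (Submodule.zero_mem F)
    have h0 : Metric.infDist v₂ (F : Set (EuclideanSpace ℝ (Fin k))) = ‖b‖ :=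
      aux_infDist_eq F v₂ p₂ hp₂F hbF
    rw [h0] at hle
    simpa using hle
  -- key identity
  have hkey : ‖a‖ * ‖b - c₂ • a‖ = ‖b‖ * ‖a - c₁ • b‖ := by
    have hA : ‖a‖ ^ 2 ≠ 0 := pow_ne_zero 2 (norm_ne_zero_iff.2 ha0)
    have hB : ‖b‖ ^ 2 ≠ 0 := pow_ne_zero 2 (norm_ne_zero_iff.2 hb0)
    have e1 : ‖a‖ ^ 2 * ‖b - c₂ • a‖ ^ 2 = ‖a‖ ^ 2 * ‖b‖ ^ 2 - ⟪a, b⟫ ^ 2 := by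
      have hx : ⟪b, c₂ • a⟫ = c₂ * ⟪a, b⟫ := by
        rw [real_inner_smul_right, real_inner_comm]
      have hy : ‖c₂ • a‖ ^ 2 = c₂ ^ 2 * ‖a‖ ^ 2 := by
        rw [norm_smul, mul_pow, Real.norm_eq_abs, sq_abs]
      have hca : c₂ * ‖a‖ ^ 2 = ⟪a, b⟫ := by
        rw [hc₂]; exact div_mul_cancel₀ _ hA
      rw [norm_sub_sq_real b (c₂ • a), hx, hy]
      linear_combination (c₂ * ‖a‖ ^ 2 - (⟪a, b⟫ : ℝ)) * hca
    have e2 : ‖b‖ ^ 2 * ‖a - c₁ • b‖ ^ 2 = ‖a‖ ^ 2 * ‖b‖ ^ 2 - ⟪a, b⟫ ^ 2 := by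
      have hx : ⟪a, c₁ • b⟫ = c₁ * ⟪a, b⟫ := real_inner_smul_right _ _ _
      have hy : ‖c₁ • b‖ ^ 2 = c₁ ^ 2 * ‖b‖ ^ 2 := by
        rw [norm_smul, mul_pow, Real.norm_eq_abs, sq_abs]
      have hcb : c₁ * ‖b‖ ^ 2 = ⟪a, b⟫ := by
        rw [hc₁]; exact div_mul_cancel₀ _ hB
      rw [norm_sub_sq_real a (c₁ • b), hx, hy]
      linear_combination (c₁ * ‖b‖ ^ 2 - (⟪a, b⟫ : ℝ)) * hcb
    have hsq : (‖a‖ * ‖b - c₂ • a‖) ^ 2 = (‖b‖ * ‖a - c₁ • b‖) ^ 2 := by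
      rw [mul_pow, mul_pow, e1, e2]
    have h1 : 0 ≤ ‖a‖ * ‖b - c₂ • a‖ := mul_nonneg (norm_nonneg _) (norm_nonneg _)
    have h2 : 0 ≤ ‖b‖ * ‖a - c₁ • b‖ := mul_nonneg (norm_nonneg _) (norm_nonneg _)
    nlinarith [hsq, h1, h2]
  -- conclude
  rw [d0, d12]
  rw [le_div_iff₀ (hd21pos)]
  rw [d21]
  calc ‖a‖ * ‖b - c₂ • a‖ = ‖b‖ * ‖a - c₁ • b‖ := hkey
    _ ≤ ‖v₂‖ * ‖a - c₁ • b‖ := mul_le_mul_of_nonneg_right hb_le (norm_nonneg _)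
    _ = ‖a - c₁ • b‖ * ‖v₂‖ := mul_comm _ _
end

section
/- For any m×k real matrix Q (with m ≤ k), the smallest singular value of the transpose Q^T satisfies: min over i ∈ [m] of dist(row_i(Q), H_i(Q)) ≥ s_min(Q^T) ≥ m^{-1/2} · min over i ∈ [m] of dist(row_i(Q), H_i(Q)), where H_i(Q) is the span of the rows of Q other than row i. -/
/-- View a plain vector as an element of Euclidean space. -/
noncomputable def toE {ι : Type*} [Fintype ι] (v : ι → ℝ) : EuclideanSpace ℝ ι :=
  (WithLp.equiv 2 (ι → ℝ)).symm v

theorem toE_sum {ι : Type*} [Fintype ι] {k : ℕ} (w : ι → ℝ) (Q : ι → (Fin k → ℝ)) :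
    toE (fun a => ∑ j, w j * Q j a) = ∑ j, w j • toE (Q j) := by
  have h : ∀ v : Fin k → ℝ, toE v = (WithLp.linearEquiv 2 ℝ (Fin k → ℝ)).symm v := fun _ => rfl
  simp only [h, ← map_smul, ← map_sum]
  congr 1
  ext a
  simp [Finset.sum_apply, mul_comm]

theorem infDist_proj {E : Type*} [NormedAddCommGroup E] [InnerProductSpace ℝ E]
    (K : Submodule ℝ E) [K.HasOrthogonalProjection] (x : E) :
    Metric.infDist x (K : Set E) = ‖x - K.orthogonalProjectionOnto x‖ := by
  rw [Metric.infDist_eq_iInf, ← Submodule.starProjection_apply, Submodule.starProjection_minimal]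
  simp [dist_eq_norm]

theorem coordAbs {ι : Type*} [Fintype ι] (x : EuclideanSpace ℝ ι) (i : ι) : |x i| ≤ ‖x‖ := by
  rw [EuclideanSpace.norm_eq]
  have : |x i| = Real.sqrt (‖x i‖ ^ 2) := by
    rw [Real.sqrt_sq_eq_abs, abs_norm, Real.norm_eq_abs]
  rw [this]
  apply Real.sqrt_le_sqrt
  exact Finset.single_le_sum (f := fun j => ‖x j‖ ^ 2) (fun j _ => by positivity)
    (Finset.mem_univ i)

/-- For an `m×k` matrix `Q` (`m ≤ k`), with `sₘᵢₙ(Qᵀ) = inf {‖Qᵀ v‖ : ‖v‖ = 1}`: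
`min_i dist(row_i Q, H_i(Q)) ≥ sₘᵢₙ(Qᵀ) ≥ m^{-1/2} · min_i dist(row_i Q, H_i(Q))`,
where `H_i(Q)` is the span of the rows of `Q` other than row `i`. -/
theorem stmt2 {m k : ℕ} (hm : 0 < m) (hmk : m ≤ k) (Q : Matrix (Fin m) (Fin k) ℝ) :
    ((⨅ i : Fin m, Metric.infDist (toE (Q i))
        (Submodule.span ℝ ((fun j => toE (Q j)) '' {j | j ≠ i}) :
          Set (EuclideanSpace ℝ (Fin k)))) ≥
      sInf {x : ℝ | ∃ v : EuclideanSpace ℝ (Fin m), ‖v‖ = 1 ∧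
        x = ‖toE (Q.transpose.mulVec (WithLp.equiv 2 (Fin m → ℝ) v))‖}) ∧
    (sInf {x : ℝ | ∃ v : EuclideanSpace ℝ (Fin m), ‖v‖ = 1 ∧
        x = ‖toE (Q.transpose.mulVec (WithLp.equiv 2 (Fin m → ℝ) v))‖} ≥
      (m : ℝ) ^ (-(1/2 : ℝ)) *
        ⨅ i : Fin m, Metric.infDist (toE (Q i))
          (Submodule.span ℝ ((fun j => toE (Q j)) '' {j | j ≠ i}) :
            Set (EuclideanSpace ℝ (Fin k)))) := by
  classical
  set E := EuclideanSpace ℝ (Fin k)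
  set q : Fin m → E := fun j => toE (Q j) with hq
  set K : Fin m → Submodule ℝ E :=
    fun i => Submodule.span ℝ ((fun j => toE (Q j)) '' {j | j ≠ i}) with hK
  set S : Set ℝ := {x : ℝ | ∃ v : EuclideanSpace ℝ (Fin m), ‖v‖ = 1 ∧
      x = ‖toE (Q.transpose.mulVec (WithLp.equiv 2 (Fin m → ℝ) v))‖} with hS
  set d : Fin m → ℝ := fun i => Metric.infDist (q i) (K i : Set E) with hd
  -- Fact A : mulVec as a linear combination of rows
  have factA : ∀ u : Fin m → ℝ, toE (Q.transpose.mulVec u) = ∑ j, u j • q j := by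
    intro u
    have : Q.transpose.mulVec u = fun a => ∑ j, u j * Q j a := by
      funext a
      simp [Matrix.mulVec, Matrix.transpose_apply, dotProduct, mul_comm]
    rw [this]; exact toE_sum u Q
  have hSbdd : BddBelow S := ⟨0, fun x hx => by obtain ⟨v, -, rfl⟩ := hx; positivity⟩
  have hdnn : ∀ i, 0 ≤ d i := fun i => Metric.infDist_nonneg
  have hSne : S.Nonempty := by
    refine ⟨_, EuclideanSpace.single ⟨0, hm⟩ (1:ℝ), ?_, rfl⟩
    simp [EuclideanSpace.norm_single]
  haveI : Nonempty (Fin m) := ⟨⟨0, hm⟩⟩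
  constructor
  · -- upper bound : sInf S ≤ each d i
    refine le_ciInf fun i => ?_
    haveI : Nonempty ((K i : Set E)) := ⟨⟨0, (K i).zero_mem⟩⟩
    rw [show d i = Metric.infDist (q i) ((K i : Set E)) from rfl, Metric.infDist_eq_iInf]
    refine le_ciInf fun y => ?_
    -- represent y as a combination of rows j ≠ i
    have hyK : (y : E) ∈ Submodule.span ℝ ((fun j => toE (Q j)) '' {j | j ≠ i}) := y.2
    rw [Set.image_eq_range] at hyK
    obtain ⟨c, hc⟩ := Submodule.mem_span_range_iff_exists_fun ℝ |>.mp hyK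
    set c' : Fin m → ℝ := fun j => if hj : j = i then 0 else c ⟨j, hj⟩ with hc'
    have hy : ∑ j ∈ ({i}ᶜ : Finset (Fin m)), c' j • q j = (y : E) := by
      rw [Finset.sum_subtype (p := fun j => j ∈ {j | j ≠ i}) ({i}ᶜ : Finset (Fin m))
        (fun x => by simp [Finset.mem_compl, Set.mem_setOf_eq]) (fun j => c' j • q j)]
      rw [← hc]
      refine Finset.sum_congr rfl fun j _ => ?_
      have : c' (j : Fin m) = c j := by
        rw [hc']; simp only [dif_neg j.2]
      rw [this]
    set w : Fin m → ℝ := fun j => if j = i then 1 else -c' j with hw'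
    have hw : ∑ j, w j • q j = q i - (y : E) := by
      rw [Fintype.sum_eq_add_sum_compl i]
      have h1 : w i = 1 := by rw [hw']; simp
      have h2 : ∑ j ∈ ({i}ᶜ : Finset (Fin m)), w j • q j
          = -∑ j ∈ ({i}ᶜ : Finset (Fin m)), c' j • q j := by
        rw [← Finset.sum_neg_distrib]
        refine Finset.sum_congr rfl fun j hj => ?_
        have hji : j ≠ i := by simpa [Finset.mem_compl] using hj
        rw [hw']; simp [hji, neg_smul]
      rw [h1, h2, hy, one_smul]
      exact (sub_eq_add_neg _ _).symm
    -- norm of w is at least 1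
    have hwi : (toE w) i = w i := rfl
    have hwn : (1 : ℝ) ≤ ‖toE w‖ := by
      have := coordAbs (toE w) i
      rw [hwi, hw'] at this
      simpa using this
    have hn0 : ‖toE w‖ ≠ 0 := by linarith
    set v : EuclideanSpace ℝ (Fin m) := ‖toE w‖⁻¹ • toE w with hv'
    have hv1 : ‖v‖ = 1 := by
      rw [hv', norm_smul, norm_inv, norm_norm, inv_mul_cancel₀ hn0]
    have hmem : ‖toE (Q.transpose.mulVec (WithLp.equiv 2 (Fin m → ℝ) v))‖ ∈ S :=
      ⟨v, hv1, rfl⟩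
    have hval : ‖toE (Q.transpose.mulVec (WithLp.equiv 2 (Fin m → ℝ) v))‖
        = ‖toE w‖⁻¹ * ‖q i - (y : E)‖ := by
      have h3 : (WithLp.equiv 2 (Fin m → ℝ) v) = ‖toE w‖⁻¹ • w := by
        rw [hv']; rfl
      rw [h3, Matrix.mulVec_smul]
      have h4 : toE (‖toE w‖⁻¹ • Q.transpose.mulVec w)
          = ‖toE w‖⁻¹ • toE (Q.transpose.mulVec w) := rfl
      rw [h4, norm_smul, factA, hw, norm_inv, norm_norm]
    calc sInf S ≤ ‖toE (Q.transpose.mulVec (WithLp.equiv 2 (Fin m → ℝ) v))‖ :=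
          csInf_le hSbdd hmem
      _ = ‖toE w‖⁻¹ * ‖q i - (y : E)‖ := hval
      _ ≤ 1 * ‖q i - (y : E)‖ := by
          apply mul_le_mul_of_nonneg_right _ (norm_nonneg _)
          exact inv_le_one_of_one_le₀ hwn
      _ = dist (q i) (y : E) := by rw [one_mul, dist_eq_norm]
  · -- lower bound
    have hDub : ∀ i, (⨅ i, d i) ≤ d i := fun i =>
      ciInf_le ⟨0, fun x ⟨j, hj⟩ => hj ▸ hdnn j⟩ i
    have hrpow : (m : ℝ) ^ (-(1/2 : ℝ)) = (Real.sqrt m)⁻¹ := by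
      rw [Real.rpow_neg (by positivity), Real.sqrt_eq_rpow]
    refine le_csInf hSne fun x hx => ?_
    obtain ⟨v, hv, rfl⟩ := hx
    -- find a big coordinate
    have hsum : ∑ j, (v j) ^ 2 = 1 := by
      have h1 := EuclideanSpace.norm_eq v
      rw [hv] at h1
      have h2 : Real.sqrt (∑ j, ‖v j‖ ^ 2) = 1 := h1.symm
      have h3 : ∑ j, ‖v j‖ ^ 2 = 1 := by
        have hnn : (0:ℝ) ≤ ∑ j, ‖v j‖ ^ 2 := Finset.sum_nonneg fun j _ => by positivity
        rw [← Real.sq_sqrt hnn, h2]; norm_num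
      simpa [Real.norm_eq_abs, sq_abs] using h3
    have hbig : ∃ i : Fin m, (1 : ℝ) / m ≤ (v i) ^ 2 := by
      by_contra hcon
      push_neg at hcon
      have : ∑ j, (v j) ^ 2 < ∑ _j : Fin m, (1 : ℝ) / m :=
        Finset.sum_lt_sum_of_nonempty (by simp [Finset.univ_nonempty_iff, Fin.pos_iff_nonempty.mp hm])
          fun j _ => hcon j
      have hm' : (0:ℝ) < m := by exact_mod_cast hm
      rw [hsum] at this
      simp only [Finset.sum_const, Finset.card_univ, Fintype.card_fin, nsmul_eq_mul,
        mul_one_div, div_self hm'.ne'] at this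
      exact lt_irrefl _ this
    obtain ⟨i, hi⟩ := hbig
    have hvi : (Real.sqrt m)⁻¹ ≤ |v i| := by
      have h1 : Real.sqrt (1 / m) ≤ Real.sqrt ((v i) ^ 2) := Real.sqrt_le_sqrt hi
      rw [Real.sqrt_sq_eq_abs] at h1
      rw [← Real.sqrt_inv, inv_eq_one_div]
      exact h1
    -- decompose Qᵀ v
    set h : E := ∑ j ∈ ({i}ᶜ : Finset (Fin m)), v j • q j with hh'
    have hhK : h ∈ K i := by
      refine Submodule.sum_mem _ fun j hj => Submodule.smul_mem _ _ ?_
      have hji : j ≠ i := by simpa [Finset.mem_compl] using hj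
      exact Submodule.subset_span ⟨j, hji, rfl⟩
    have hdecomp : toE (Q.transpose.mulVec (WithLp.equiv 2 (Fin m → ℝ) v))
        = v i • q i + h := by
      rw [factA, Fintype.sum_eq_add_sum_compl i]
      rfl
    -- projection computation
    set P := (K i).orthogonalProjectionOnto with hP
    have hproj : (P (v i • q i + h) : E) = v i • (P (q i) : E) + h := by
      rw [map_add, map_smul]
      have hPh : (P h : E) = h := by
        rw [hP, ← Submodule.starProjection_apply]; exact Submodule.starProjection_eq_self_iff.mpr hhK
      rw [Submodule.coe_add, Submodule.coe_smul, hPh]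
    have hdist : Metric.infDist (v i • q i + h) (K i : Set E)
        = |v i| * Metric.infDist (q i) (K i : Set E) := by
      rw [infDist_proj, infDist_proj, hproj]
      have : (v i • q i + h) - (v i • (P (q i) : E) + h) = v i • (q i - (P (q i) : E)) := by
        rw [smul_sub]; abel
      rw [this, norm_smul, Real.norm_eq_abs]
    calc (m : ℝ) ^ (-(1/2 : ℝ)) * ⨅ i, d i
        ≤ (Real.sqrt m)⁻¹ * d i := by
          rw [hrpow]
          exact mul_le_mul_of_nonneg_left (hDub i) (by positivity)
      _ ≤ |v i| * d i := mul_le_mul_of_nonneg_right hvi (hdnn i)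
      _ = Metric.infDist (v i • q i + h) (K i : Set E) := hdist.symm
      _ ≤ dist (v i • q i + h) 0 := Metric.infDist_le_dist_of_mem (K i).zero_mem
      _ = ‖toE (Q.transpose.mulVec (WithLp.equiv 2 (Fin m → ℝ) v))‖ := by
          rw [dist_zero_right, hdecomp]
end

section
/- Let Q be an m×k matrix, u ∈ R^m a unit vector, and s ∈ [m] an index with |u_s| ≥ m^{-1/2}. Then ‖Q^T u‖ ≥ m^{-1/2} · dist(row_s(Q), span of rows of Q other than row s). -/
/-- If `u` is a unit vector in `ℝ^m` with `|u_s| ≥ m^{-1/2}`, then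
`‖Qᵀ u‖ ≥ m^{-1/2} · dist(row_s Q, span of the other rows of Q)`. -/
theorem stmt3 {m k : ℕ} (Q : Matrix (Fin m) (Fin k) ℝ)
    (u : EuclideanSpace ℝ (Fin m)) (hu : ‖u‖ = 1) (s : Fin m)
    (hs : (m : ℝ) ^ (-(1/2 : ℝ)) ≤ |WithLp.equiv 2 (Fin m → ℝ) u s|) :
    (m : ℝ) ^ (-(1/2 : ℝ)) *
        Metric.infDist (toE (Q s))
          (Submodule.span ℝ ((fun j => toE (Q j)) '' {j | j ≠ s}) :
            Set (EuclideanSpace ℝ (Fin k))) ≤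
      ‖toE (Q.transpose.mulVec (WithLp.equiv 2 (Fin m → ℝ) u))‖ := by
  have hm : 0 < m := s.pos
  set u' : Fin m → ℝ := WithLp.equiv 2 (Fin m → ℝ) u with hu'
  have hrpos : (0:ℝ) < (m : ℝ) ^ (-(1/2 : ℝ)) :=
    Real.rpow_pos_of_pos (by exact_mod_cast hm) _
  have hus : u' s ≠ 0 := by
    intro h
    rw [h] at hs
    simp at hs
    linarith
  have key : toE (Q.transpose.mulVec u') = ∑ t, u' t • toE (Q t) := by
    ext j
    simp [toE, Matrix.mulVec, Matrix.transpose, dotProduct, mul_comm]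
  set S : Submodule ℝ (EuclideanSpace ℝ (Fin k)) :=
    Submodule.span ℝ ((fun j => toE (Q j)) '' {j | j ≠ s}) with hS
  set w : EuclideanSpace ℝ (Fin k) := ∑ t ∈ Finset.univ.erase s, u' t • toE (Q t) with hw
  have hwS : w ∈ S := by
    apply Submodule.sum_mem
    intro t ht
    apply Submodule.smul_mem
    apply Submodule.subset_span
    exact ⟨t, Finset.ne_of_mem_erase ht, rfl⟩
  set p : EuclideanSpace ℝ (Fin k) := (-(u' s)⁻¹) • w with hp
  have hpS : p ∈ S := Submodule.smul_mem _ _ hwS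
  have key2 : toE (Q.transpose.mulVec u') = u' s • (toE (Q s) - p) := by
    rw [key, hp, smul_sub, smul_smul, mul_neg, mul_inv_cancel₀ hus, neg_smul, one_smul,
      sub_neg_eq_add]
    exact (Finset.add_sum_erase _ (fun t => u' t • toE (Q t)) (Finset.mem_univ s)).symm
  have hnorm : ‖toE (Q.transpose.mulVec u')‖ = |u' s| * ‖toE (Q s) - p‖ := by
    rw [key2, norm_smul, Real.norm_eq_abs]
  have hd : Metric.infDist (toE (Q s)) (S : Set (EuclideanSpace ℝ (Fin k)))
      ≤ ‖toE (Q s) - p‖ := by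
    have := Metric.infDist_le_dist_of_mem (x := toE (Q s)) hpS
    rwa [dist_eq_norm] at this
  rw [hnorm]
  calc (m : ℝ) ^ (-(1/2 : ℝ)) * Metric.infDist (toE (Q s)) (S : Set (EuclideanSpace ℝ (Fin k)))
      ≤ |u' s| * Metric.infDist (toE (Q s)) (S : Set (EuclideanSpace ℝ (Fin k))) :=
        mul_le_mul_of_nonneg_right hs Metric.infDist_nonneg
    _ ≤ |u' s| * ‖toE (Q s) - p‖ :=
        mul_le_mul_of_nonneg_left hd (abs_nonneg _)
end

section
/- Let B be an n×m random matrix (m ≥ n) whose entries are i.i.d. with continuous distribution. Then for r ∈ [n] and I ⊂ [n] with |I| = r, almost surely the following are equivalent: (1) I_r(B) = I; (2) for all s ∈ [r], i_s(B) = i_s(B_{I,[m]}), v_s(B) = v_s(B_{I,[m]}), and K_s(B) = K_s(B_{I,[m]}); (3) for all j ∈ [n]\I, (B_{j,[m]})^T ∈ K_r(B_{I,[m]}). -/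
open MeasureTheory

/-- The bilinear pairing `⟨a, b⟩ = ∑ j, a j * b j`. -/
noncomputable def pdot {m : ℕ} (a b : Fin m → ℝ) : ℝ := ∑ j, a j * b j

/-- The defining properties of the `s`-th step (1-indexed) of the GEPP pivot recursion. -/
def IsPivotStep {ι : Type*} {m : ℕ} (B : Matrix ι (Fin m) ℝ)
    (idx : ℕ → ι) (v : ℕ → Fin m → ℝ) (s : ℕ) : Prop :=
  (∀ j : Fin m, s ≤ (j : ℕ) → v s j = 0) ∧
  (∀ j : Fin m, (j : ℕ) = s - 1 → v s j = 1) ∧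
  (∀ t, 1 ≤ t → t < s → pdot (v s) (B (idx t)) = 0) ∧
  (∀ t, 1 ≤ t → t < s → idx s ≠ idx t) ∧
  (∀ i : ι, (∀ t, 1 ≤ t → t < s → i ≠ idx t) →
    |pdot (v s) (B i)| ≤ |pdot (v s) (B (idx s))|)

/-- `(idx, v)` is a valid GEPP pivot sequence for `B` through step `r`. -/
def IsPivotSeq {ι : Type*} {m : ℕ} (B : Matrix ι (Fin m) ℝ)
    (idx : ℕ → ι) (v : ℕ → Fin m → ℝ) (r : ℕ) : Prop :=
  ∀ s, 1 ≤ s → s ≤ r → IsPivotStep B idx v s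

/-- The GEPP pivot polytope `K_r(B)`. -/
def Kpoly {ι : Type*} {m : ℕ} (B : Matrix ι (Fin m) ℝ)
    (idx : ℕ → ι) (v : ℕ → Fin m → ℝ) (r : ℕ) : Set (Fin m → ℝ) :=
  {x | ∀ s, 1 ≤ s → s ≤ r → |pdot (v s) x| ≤ |pdot (v s) (B (idx s))|}


open MvPolynomial

section Aux

variable {ν : Measure ℝ} [IsProbabilityMeasure ν] [NullSingletonClass ν]

lemma measurable_mveval {σ : Type*} [Fintype σ] (P : MvPolynomial σ ℝ) :
    Measurable fun x : σ → ℝ => MvPolynomial.eval x P := by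
  induction P using MvPolynomial.induction_on with
  | C a => simpa using measurable_const
  | add p q hp hq => simp only [map_add]; exact hp.add hq
  | mul_X p i hp => simp only [map_mul, MvPolynomial.eval_X]; exact hp.mul (measurable_pi_apply i)

lemma null_eval_zero_fin : ∀ (k : ℕ) (P : MvPolynomial (Fin k) ℝ), P ≠ 0 →
    Measure.pi (fun _ : Fin k => ν) {x | MvPolynomial.eval x P = 0} = 0 := by
  intro k
  induction k with
  | zero =>
    intro P hP
    obtain ⟨a, rfl⟩ := MvPolynomial.C_surjective (Fin 0) P
    have ha : a ≠ 0 := fun h => hP (by simp [h])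
    have h0 : {x : Fin 0 → ℝ | MvPolynomial.eval x (C a) = 0} = ∅ := by
      ext x; simp [ha]
    rw [h0, measure_empty]
  | succ k ih =>
    intro P hP
    set Q : Polynomial (MvPolynomial (Fin k) ℝ) := MvPolynomial.finSuccEquiv ℝ k P with hQ
    have hQ0 : Q ≠ 0 := by
      simp only [hQ, ne_eq, EmbeddingLike.map_eq_zero_iff]; exact hP
    have hmp := measurePreserving_piFinSuccAbove (fun _ : Fin (k+1) => ν) 0
    set e := MeasurableEquiv.piFinSuccAbove (fun _ : Fin (k+1) => ℝ) 0 with he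
    have heapp : ∀ x : Fin (k+1) → ℝ, e x = (x 0, fun j => x j.succ) := by
      intro x
      show (Fin.insertNthEquiv (fun _ : Fin (k+1) => ℝ) 0).symm x = _
      ext
      · simp
      · simp [Fin.removeNth, Fin.zero_succAbove, Fin.tail]
    set T : Set (ℝ × (Fin k → ℝ)) :=
      {p | Polynomial.eval p.1 (Polynomial.map (MvPolynomial.eval p.2) Q) = 0} with hT
    have hmeasT : MeasurableSet T := by
      have hfun : (fun p : ℝ × (Fin k → ℝ) =>
          Polynomial.eval p.1 (Polynomial.map (MvPolynomial.eval p.2) Q)) =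
          fun p => ∑ i ∈ Finset.range (Q.natDegree + 1),
            MvPolynomial.eval p.2 (Q.coeff i) * p.1 ^ i := by
        funext p
        rw [Polynomial.eval_eq_sum_range' (lt_of_le_of_lt Polynomial.natDegree_map_le
          (Nat.lt_succ_self _))]
        simp [Polynomial.coeff_map]
      have hm : Measurable (fun p : ℝ × (Fin k → ℝ) =>
          Polynomial.eval p.1 (Polynomial.map (MvPolynomial.eval p.2) Q)) := by
        rw [hfun]
        exact Finset.measurable_sum _ fun i _ =>
          ((measurable_mveval _).comp measurable_snd).mul (measurable_fst.pow measurable_const)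
      exact hm (measurableSet_singleton 0)
    have key : ∀ x : Fin (k+1) → ℝ, MvPolynomial.eval x P =
        Polynomial.eval (x 0) (Polynomial.map (MvPolynomial.eval (fun j => x j.succ)) Q) := by
      intro x
      conv_lhs => rw [show x = Fin.cons (x 0) (fun j => x j.succ) by
        funext j; cases j using Fin.cases <;> simp]
      exact MvPolynomial.eval_eq_eval_mv_eval' _ _ P
    have hpre : {x : Fin (k+1) → ℝ | MvPolynomial.eval x P = 0} = e ⁻¹' T := by
      ext x
      simp only [Set.mem_setOf_eq, Set.mem_preimage, hT, heapp x, key x]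
    rw [hpre, hmp.measure_preimage hmeasT.nullMeasurableSet]
    have hswap : (ν.prod (Measure.pi fun _ : Fin k => ν)) T =
        ((Measure.pi fun _ : Fin k => ν).prod ν) (Prod.swap ⁻¹' T) := by
      rw [← Measure.prod_swap, Measure.map_apply measurable_swap hmeasT]
    rw [hswap, Measure.measure_prod_null (measurable_swap hmeasT)]
    have hlead : Q.coeff Q.natDegree ≠ 0 := by
      rw [← Polynomial.leadingCoeff]
      exact Polynomial.leadingCoeff_ne_zero.mpr hQ0
    have hae : ∀ᵐ y ∂(Measure.pi fun _ : Fin k => ν),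
        MvPolynomial.eval y (Q.coeff Q.natDegree) ≠ 0 := by
      rw [ae_iff]
      convert ih _ hlead using 2
      ext y
      simp [not_not]
    filter_upwards [hae] with y hy
    have hR : Polynomial.map (MvPolynomial.eval y) Q ≠ 0 := by
      intro h
      apply hy
      have := congrArg (fun p => Polynomial.coeff p Q.natDegree) h
      simpa [Polynomial.coeff_map] using this
    have hsub : (Prod.mk y ⁻¹' (Prod.swap ⁻¹' T)) ⊆
        {a : ℝ | (Polynomial.map (MvPolynomial.eval y) Q).IsRoot a} := by
      intro a ha
      exact ha
    exact measure_mono_null hsub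
      ((Polynomial.finite_setOf_isRoot hR).countable.measure_zero ν)

lemma null_eval_zero {σ : Type*} [Fintype σ] (P : MvPolynomial σ ℝ) (hP : P ≠ 0) :
    Measure.pi (fun _ : σ => ν) {x | MvPolynomial.eval x P = 0} = 0 := by
  classical
  let f : Fin (Fintype.card σ) ≃ σ := (Fintype.equivFin σ).symm
  have hmp := measurePreserving_piCongrLeft (fun _ : σ => ν) f
  have hmeas : MeasurableSet {x : σ → ℝ | MvPolynomial.eval x P = 0} :=
    measurable_mveval P (measurableSet_singleton 0)
  rw [← hmp.map_eq, Measure.map_apply (MeasurableEquiv.piCongrLeft _ f).measurable hmeas]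
  have hpre : (MeasurableEquiv.piCongrLeft (fun _ : σ => ℝ) f) ⁻¹'
      {x : σ → ℝ | MvPolynomial.eval x P = 0} =
      {y : Fin (Fintype.card σ) → ℝ | MvPolynomial.eval y (rename f.symm P) = 0} := by
    ext y
    simp only [Set.mem_preimage, Set.mem_setOf_eq, MvPolynomial.eval_rename]
    have : (MeasurableEquiv.piCongrLeft (fun _ : σ => ℝ) f) y = y ∘ f.symm := by
      funext s
      simp [MeasurableEquiv.piCongrLeft, Equiv.piCongrLeft]
    rw [this]
  rw [hpre]
  exact null_eval_zero_fin _ _ (fun h => hP (by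
    have := MvPolynomial.rename_injective (R := ℝ) (f := f.symm) f.symm.injective
    exact this (by simpa using h)))



variable {n m : ℕ}

/-- The columns `0,…,c` of a matrix, indexed by `Fin c ⊕ Unit`. -/
def pcol {m : ℕ} {c : ℕ} (hc : c + 1 ≤ m) : Fin c ⊕ Unit → Fin m :=
  Sum.elim (fun t => Fin.castLE (by omega) t) (fun _ => ⟨c, hc⟩)

def Mmat (A : Matrix (Fin n) (Fin m) ℝ) {c : ℕ} (hc : c + 1 ≤ m)
    (e : Fin c → Fin n) : Matrix (Fin c) (Fin c) ℝ :=
  fun a b => A (e a) (Fin.castLE (by omega) b)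

def Nmat (A : Matrix (Fin n) (Fin m) ℝ) {c : ℕ} (hc : c + 1 ≤ m)
    (e : Fin c → Fin n) (i : Fin n) : Matrix (Fin c ⊕ Unit) (Fin c ⊕ Unit) ℝ :=
  fun a b => A (Sum.elim e (fun _ => i) a) (pcol hc b)

lemma pcol_injective {c : ℕ} (hc : c + 1 ≤ m) : Function.Injective (pcol (m := m) hc) := by
  intro a b hab
  cases a with
  | inl t => cases b with
    | inl t' =>
      simp only [pcol, Sum.elim_inl] at hab
      exact congrArg Sum.inl (Fin.castLE_injective _ hab)
    | inr u =>
      exfalso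
      have := congrArg Fin.val hab
      simp [pcol] at this
      omega
  | inr u => cases b with
    | inl t' =>
      exfalso
      have := congrArg Fin.val hab
      simp [pcol] at this
      omega
    | inr u' => cases u; cases u'; rfl

/-- Reduce a `pdot` with a vector supported on the first `c+1` coordinates to a sum over
`Fin c ⊕ Unit`. -/
lemma pdot_eq_sum_pcol {c : ℕ} (hc : c + 1 ≤ m) (v w : Fin m → ℝ)
    (hv0 : ∀ j : Fin m, c + 1 ≤ (j : ℕ) → v j = 0) :
    pdot v w = ∑ b : Fin c ⊕ Unit, v (pcol hc b) * w (pcol hc b) := by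
  classical
  rw [pdot]
  rw [show (Finset.univ : Finset (Fin m)).sum (fun j => v j * w j) =
      ∑ j ∈ Finset.univ.image (pcol hc), v j * w j from
    (Finset.sum_subset (Finset.subset_univ _) ?_).symm]
  · rw [Finset.sum_image (fun a _ b _ h => pcol_injective hc h)]
  · intro j _ hj
    have hzero : v j = 0 := by
      apply hv0
      by_contra hlt
      push_neg at hlt
      apply hj
      rcases lt_or_eq_of_le (Nat.lt_succ_iff.mp hlt) with h | h
      · exact Finset.mem_image.mpr ⟨Sum.inl ⟨j, h⟩, Finset.mem_univ _, by
          simp [pcol, Fin.ext_iff]⟩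
      · exact Finset.mem_image.mpr ⟨Sum.inr (), Finset.mem_univ _, by
          simp [pcol, Fin.ext_iff, h]⟩
    rw [hzero, zero_mul]

/-- Cramer-type identity: `det (Nmat) = ⟨v, A i⟩ * det (Mmat)` for any `v` satisfying the pivot
vector conditions for the rows `e`. -/
lemma det_Nmat_eq (A : Matrix (Fin n) (Fin m) ℝ) {c : ℕ} (hc : c + 1 ≤ m)
    (e : Fin c → Fin n) (i : Fin n) (v : Fin m → ℝ)
    (hv0 : ∀ j : Fin m, c + 1 ≤ (j : ℕ) → v j = 0)
    (hv1 : ∀ j : Fin m, (j : ℕ) = c → v j = 1)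
    (horth : ∀ t : Fin c, pdot v (A (e t)) = 0) :
    (Nmat A hc e i).det = pdot v (A i) * (Mmat A hc e).det := by
  classical
  set N := Nmat A hc e i with hN
  set u : Fin c ⊕ Unit → ℝ := fun b => v (pcol hc b) with hu
  have hu1 : u (Sum.inr ()) = 1 := hv1 _ rfl
  have hrow : ∀ a : Fin c ⊕ Unit, (∑ b, u b • N a b) =
      pdot v (A (Sum.elim e (fun _ => i) a)) := by
    intro a
    rw [pdot_eq_sum_pcol hc v _ hv0]
    simp [hu, hN, Nmat, smul_eq_mul, mul_comm]
  have hupdate := Matrix.det_updateCol_sum N (Sum.inr ()) u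
  rw [hu1, one_smul] at hupdate
  -- identify the updated matrix with a block matrix
  have hblock : N.updateCol (Sum.inr ()) (fun k => ∑ b, u b • N k b) =
      Matrix.fromBlocks (Mmat A hc e) 0
        (Matrix.of fun _ t => A i (Fin.castLE (by omega) t)) (Matrix.of fun _ _ => pdot v (A i)) := by
    ext a b
    cases a with
    | inl t =>
      cases b with
      | inl t' => simp [Matrix.updateCol_apply, hN, Nmat, Mmat, pcol]
      | inr u' =>
        cases u'
        rw [Matrix.updateCol_apply, if_pos rfl, hrow]
        simpa using horth t
    | inr u' =>
      cases u'
      cases b with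
      | inl t' => simp [Matrix.updateCol_apply, hN, Nmat, pcol]
      | inr u'' =>
        cases u''
        rw [Matrix.updateCol_apply, if_pos rfl, hrow]
        simp
  rw [hblock] at hupdate
  rw [Matrix.det_fromBlocks_zero₁₂] at hupdate
  rw [← hupdate,
    show Matrix.det (Matrix.of fun _ _ : Unit => pdot v (A i)) = pdot v (A i) from Matrix.det_unique _]
  ring

/-- Uniqueness of the pivot vector when the leading square submatrix is invertible. -/
lemma pivot_vec_unique (A : Matrix (Fin n) (Fin m) ℝ) {c : ℕ} (hc : c + 1 ≤ m)
    (e : Fin c → Fin n) (hdet : (Mmat A hc e).det ≠ 0) (v v' : Fin m → ℝ)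
    (hv0 : ∀ j : Fin m, c + 1 ≤ (j : ℕ) → v j = 0)
    (hv1 : ∀ j : Fin m, (j : ℕ) = c → v j = 1)
    (horth : ∀ t : Fin c, pdot v (A (e t)) = 0)
    (hv0' : ∀ j : Fin m, c + 1 ≤ (j : ℕ) → v' j = 0)
    (hv1' : ∀ j : Fin m, (j : ℕ) = c → v' j = 1)
    (horth' : ∀ t : Fin c, pdot v' (A (e t)) = 0) : v = v' := by
  classical
  have hcm : c ≤ m := by omega
  set w : Fin m → ℝ := fun j => v j - v' j with hw
  have hw0 : ∀ j : Fin m, c ≤ (j : ℕ) → w j = 0 := by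
    intro j hj
    rcases eq_or_lt_of_le hj with h | h
    · simp [hw, hv1 j h.symm, hv1' j h.symm]
    · simp [hw, hv0 j h, hv0' j h]
  set w' : Fin c → ℝ := fun t => w (Fin.castLE hcm t) with hw'
  have hmv : (Mmat A hc e).mulVec w' = 0 := by
    funext a
    have h1 : pdot w (A (e a)) = 0 := by
      have := horth a
      have := horth' a
      simp only [pdot, hw, sub_mul, Finset.sum_sub_distrib]
      rw [show (∑ j, v j * A (e a) j) = pdot v (A (e a)) from rfl,
        show (∑ j, v' j * A (e a) j) = pdot v' (A (e a)) from rfl, horth a, horth' a, sub_zero]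
    -- restrict the sum to the first c coordinates
    have h2 : pdot w (A (e a)) = ∑ t : Fin c, w (Fin.castLE hcm t) * A (e a) (Fin.castLE hcm t) := by
      rw [pdot]
      rw [show (Finset.univ : Finset (Fin m)).sum (fun j => w j * A (e a) j) =
          ∑ j ∈ Finset.univ.image (Fin.castLE hcm), w j * A (e a) j from
        (Finset.sum_subset (Finset.subset_univ _) ?_).symm]
      · rw [Finset.sum_image (fun x _ y _ h => Fin.castLE_injective hcm h)]
      · intro j _ hj
        have : c ≤ (j : ℕ) := by
          by_contra hlt
          push_neg at hlt
          exact hj (Finset.mem_image.mpr ⟨⟨j, hlt⟩, Finset.mem_univ _, by simp [Fin.ext_iff]⟩)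
        rw [hw0 j this, zero_mul]
    show (∑ t, Mmat A hc e a t * w' t) = 0
    rw [← h1, h2]
    apply Finset.sum_congr rfl
    intro t _
    rw [mul_comm]
    rfl
  have hw'0 : w' = 0 := Matrix.eq_zero_of_mulVec_eq_zero hdet hmv
  funext j
  rcases lt_or_ge (j : ℕ) c with h | h
  · have := congrFun hw'0 ⟨j, h⟩
    simp only [hw', hw, Pi.zero_apply] at this
    have hj : Fin.castLE hcm (⟨(j : ℕ), h⟩ : Fin c) = j := by simp [Fin.ext_iff]
    rw [hj] at this
    linarith
  · have := hw0 j h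
    simp only [hw] at this
    linarith

/-- The genericity condition needed for the pivot arguments. -/
def GoodMat (A : Matrix (Fin n) (Fin m) ℝ) : Prop :=
  ∀ (c : ℕ) (hc : c + 1 ≤ m) (e : Fin c → Fin n), Function.Injective e →
    (Mmat A hc e).det ≠ 0 ∧
    ∀ i i' : Fin n, i ≠ i' → (∀ t, i ≠ e t) → (∀ t, i' ≠ e t) →
      (Nmat A hc e i).det ≠ (Nmat A hc e i').det ∧
      (Nmat A hc e i).det ≠ -(Nmat A hc e i').det

open scoped Classical in
/-- Almost surely, a random matrix with i.i.d. atomless entries is `GoodMat`. -/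
lemma ae_goodMat {n m : ℕ} {Ω : Type*} [MeasurableSpace Ω] (μ : Measure Ω)
    [IsProbabilityMeasure μ] (ν : Measure ℝ) [IsProbabilityMeasure ν] [NullSingletonClass ν]
    (B : Ω → Matrix (Fin n) (Fin m) ℝ)
    (hlaw : Measure.map (fun ω => fun p : Fin n × Fin m => B ω p.1 p.2) μ =
      Measure.pi (fun _ : Fin n × Fin m => ν)) :
    ∀ᵐ ω ∂μ, GoodMat (B ω) := by
  set f : Ω → (Fin n × Fin m → ℝ) := fun ω => fun p : Fin n × Fin m => B ω p.1 p.2 with hf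
  have hfae : AEMeasurable f μ := by
    by_contra h
    rw [Measure.map_of_not_aemeasurable h] at hlaw
    have := congrArg (fun μ' : Measure (Fin n × Fin m → ℝ) => μ' Set.univ) hlaw
    simp at this
  -- atomic almost-sure events
  have atomic : ∀ P : MvPolynomial (Fin n × Fin m) ℝ, P ≠ 0 →
      ∀ᵐ ω ∂μ, MvPolynomial.eval (f ω) P ≠ 0 := by
    intro P hP
    have hms : MeasurableSet {x : Fin n × Fin m → ℝ | MvPolynomial.eval x P = 0} :=
      measurable_mveval P (measurableSet_singleton 0)
    have : μ {ω | MvPolynomial.eval (f ω) P = 0} = 0 := by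
      have := Measure.map_apply_of_aemeasurable hfae hms
      rw [hlaw] at this
      rw [show {ω | MvPolynomial.eval (f ω) P = 0} =
        f ⁻¹' {x | MvPolynomial.eval x P = 0} from rfl, ← this]
      exact null_eval_zero P hP
    rw [ae_iff]
    convert this using 2
    ext ω
    simp [not_not]
  -- the polynomial matrices
  have evalM : ∀ (x : Fin n × Fin m → ℝ) (c : ℕ) (hc : c + 1 ≤ m) (e : Fin c → Fin n),
      MvPolynomial.eval x
        (Matrix.det fun a b : Fin c => (X (e a, Fin.castLE (by omega) b) :
          MvPolynomial (Fin n × Fin m) ℝ)) = (Mmat (fun i j => x (i, j)) hc e).det := by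
    intro x c hc e
    refine (RingHom.map_det (MvPolynomial.eval x) _).trans ?_
    congr 1
    ext a b
    simp [Mmat, Matrix.map, RingHom.mapMatrix_apply]
    exact MvPolynomial.eval_X _
  have evalN : ∀ (x : Fin n × Fin m → ℝ) (c : ℕ) (hc : c + 1 ≤ m) (e : Fin c → Fin n)
      (i : Fin n),
      MvPolynomial.eval x
        (Matrix.det fun a b : Fin c ⊕ Unit =>
          (X (Sum.elim e (fun _ => i) a, pcol hc b) : MvPolynomial (Fin n × Fin m) ℝ)) =
        (Nmat (fun i j => x (i, j)) hc e i).det := by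
    intro x c hc e i
    refine (RingHom.map_det (MvPolynomial.eval x) _).trans ?_
    congr 1
    ext a b
    simp [Nmat, Matrix.map, RingHom.mapMatrix_apply]
    exact MvPolynomial.eval_X _
  -- nonvanishing of the determinant polynomials
  have hM_ne : ∀ (c : ℕ) (hc : c + 1 ≤ m) (e : Fin c → Fin n), Function.Injective e →
      (Matrix.det fun a b : Fin c => (X (e a, Fin.castLE (by omega : c ≤ m) b) :
        MvPolynomial (Fin n × Fin m) ℝ)) ≠ 0 := by
    intro c hc e he h0
    set x₀ : Fin n × Fin m → ℝ := fun p =>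
      if ∃ t : Fin c, e t = p.1 ∧ (Fin.castLE (by omega : c ≤ m) t : Fin m) = p.2 then 1 else 0
      with hx₀
    have h1 := evalM x₀ c hc e
    rw [h0, map_zero] at h1
    have hA : Mmat (fun i j => x₀ (i, j)) hc e = (1 : Matrix (Fin c) (Fin c) ℝ) := by
      ext a b
      rw [Matrix.one_apply]
      show (if ∃ t : Fin c, e t = e a ∧
          (Fin.castLE (by omega : c ≤ m) t : Fin m) = Fin.castLE (by omega) b
          then (1:ℝ) else 0) = _
      apply if_congr _ rfl rfl
      constructor
      · rintro ⟨t, h1, h2⟩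
        have ht : t = a := he h1
        subst ht
        exact Fin.castLE_injective _ h2
      · rintro rfl
        exact ⟨a, rfl, rfl⟩
    rw [hA, Matrix.det_one] at h1
    exact one_ne_zero h1.symm
  have hN_ne : ∀ (c : ℕ) (hc : c + 1 ≤ m) (e : Fin c → Fin n), Function.Injective e →
      ∀ i i' : Fin n, i ≠ i' → (∀ t, i ≠ e t) → (∀ t, i' ≠ e t) → ∀ σ : ℝ, σ = 1 ∨ σ = -1 →
      ((Matrix.det fun a b : Fin c ⊕ Unit =>
          (X (Sum.elim e (fun _ => i) a, pcol hc b) : MvPolynomial (Fin n × Fin m) ℝ)) -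
        C σ * (Matrix.det fun a b : Fin c ⊕ Unit =>
          (X (Sum.elim e (fun _ => i') a, pcol hc b) : MvPolynomial (Fin n × Fin m) ℝ))) ≠ 0 := by
    intro c hc e he i i' hii' hi hi' σ hσ h0
    set x₀ : Fin n × Fin m → ℝ := fun p =>
      if (∃ t : Fin c, e t = p.1 ∧ (Fin.castLE (by omega : c ≤ m) t : Fin m) = p.2) ∨
        (i = p.1 ∧ (⟨c, hc⟩ : Fin m) = p.2) then 1 else 0 with hx₀
    have h1 := congrArg (MvPolynomial.eval x₀) h0
    rw [map_zero, map_sub, map_mul, MvPolynomial.eval_C, evalN x₀ c hc e i,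
      evalN x₀ c hc e i'] at h1
    have hxapp : ∀ p : Fin n × Fin m, x₀ p =
        if (∃ t : Fin c, e t = p.1 ∧ (Fin.castLE (by omega : c ≤ m) t : Fin m) = p.2) ∨
          (i = p.1 ∧ (⟨c, hc⟩ : Fin m) = p.2) then 1 else 0 := fun p => rfl
    have hNi : Nmat (fun a b => x₀ (a, b)) hc e i =
        (1 : Matrix (Fin c ⊕ Unit) (Fin c ⊕ Unit) ℝ) := by
      ext a b
      rw [Matrix.one_apply,
        show Nmat (fun a b => x₀ (a, b)) hc e i a b =
          x₀ (Sum.elim e (fun _ => i) a, pcol hc b) from rfl, hxapp]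
      apply if_congr _ rfl rfl
      cases a with
      | inl t =>
        cases b with
        | inl t' =>
          constructor
          · rintro (⟨t'', h1, h2⟩ | ⟨h1, h2⟩)
            · obtain rfl : t'' = t := he h1
              obtain rfl : t'' = t' := Fin.castLE_injective _ h2
              rfl
            · exact absurd h1 (hi t)
          · intro h
            obtain rfl : t = t' := Sum.inl_injective h
            exact Or.inl ⟨t, rfl, rfl⟩
        | inr u =>
          constructor
          · rintro (⟨t'', h1, h2⟩ | ⟨h1, h2⟩)
            · have hval := congrArg Fin.val h2
              simp only [pcol, Sum.elim_inl, Sum.elim_inr, Fin.coe_castLE] at hval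
              have := t''.isLt
              omega
            · exact absurd h1 (hi t)
          · intro h
            simp at h
      | inr u =>
        cases b with
        | inl t' =>
          constructor
          · rintro (⟨t'', h1, h2⟩ | ⟨h1, h2⟩)
            · exact absurd h1.symm (hi t'')
            · have hval := congrArg Fin.val h2
              simp only [pcol, Sum.elim_inl, Sum.elim_inr, Fin.coe_castLE] at hval
              have := t'.isLt
              omega
          · intro h
            simp at h
        | inr u' =>
          cases u
          cases u'
          constructor
          · intro _
            rfl
          · intro _
            exact Or.inr ⟨rfl, rfl⟩
    have hNi' : (Nmat (fun a b => x₀ (a, b)) hc e i').det = 0 := by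
      apply Matrix.det_eq_zero_of_row_eq_zero (Sum.inr ())
      intro b
      rw [show Nmat (fun a b => x₀ (a, b)) hc e i' (Sum.inr ()) b =
        x₀ (i', pcol hc b) from rfl, hxapp]
      rw [if_neg]
      rintro (⟨t'', h1, h2⟩ | ⟨h1, h2⟩)
      · exact hi' t'' h1.symm
      · exact hii' h1
    rw [hNi, Matrix.det_one, hNi'] at h1
    rcases hσ with rfl | rfl <;> simp at h1
  -- assemble
  show ∀ᵐ ω ∂μ, ∀ (c : ℕ) (hc : c + 1 ≤ m) (e : Fin c → Fin n), Function.Injective e →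
    (Mmat (B ω) hc e).det ≠ 0 ∧
    ∀ i i' : Fin n, i ≠ i' → (∀ t, i ≠ e t) → (∀ t, i' ≠ e t) →
      (Nmat (B ω) hc e i).det ≠ (Nmat (B ω) hc e i').det ∧
      (Nmat (B ω) hc e i).det ≠ -(Nmat (B ω) hc e i').det
  rw [ae_all_iff]
  intro c
  rw [ae_all_iff]
  intro hc
  rw [ae_all_iff]
  intro e
  by_cases he : Function.Injective e
  swap
  · exact Filter.Eventually.of_forall fun ω hinj => absurd hinj he
  have hBf : ∀ ω, (fun a b => f ω (a, b)) = B ω := fun ω => rfl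
  have part1 : ∀ᵐ ω ∂μ, (Mmat (B ω) hc e).det ≠ 0 := by
    filter_upwards [atomic _ (hM_ne c hc e he)] with ω h
    rw [evalM (f ω) c hc e, hBf] at h
    exact h
  have part2 : ∀ᵐ ω ∂μ, ∀ i i' : Fin n, i ≠ i' → (∀ t, i ≠ e t) → (∀ t, i' ≠ e t) →
      (Nmat (B ω) hc e i).det ≠ (Nmat (B ω) hc e i').det ∧
      (Nmat (B ω) hc e i).det ≠ -(Nmat (B ω) hc e i').det := by
    rw [ae_all_iff]
    intro i
    rw [ae_all_iff]
    intro i'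
    by_cases hii' : i ≠ i'
    swap
    · exact Filter.Eventually.of_forall fun ω h => absurd h hii'
    by_cases hi : ∀ t, i ≠ e t
    swap
    · exact Filter.Eventually.of_forall fun ω _ h => absurd h hi
    by_cases hi' : ∀ t, i' ≠ e t
    swap
    · exact Filter.Eventually.of_forall fun ω _ _ h => absurd h hi'
    filter_upwards [atomic _ (hN_ne c hc e he i i' hii' hi hi' 1 (Or.inl rfl)),
      atomic _ (hN_ne c hc e he i i' hii' hi hi' (-1) (Or.inr rfl))] with ω h1 h2
    intro _ _ _
    rw [map_sub, map_mul, MvPolynomial.eval_C, evalN (f ω) c hc e i, evalN (f ω) c hc e i',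
      hBf] at h1 h2
    constructor
    · intro hEq
      apply h1
      rw [hEq]
      ring
    · intro hEq
      apply h2
      rw [hEq]
      ring
  exact (part1.and part2).mono fun ω h _ => h

section Deterministic

variable {n m : ℕ}


lemma agree_of_key (hnm : n ≤ m) (A : Matrix (Fin n) (Fin m) ℝ) (hG : GoodMat A)
    (r : ℕ) (hr1 : 1 ≤ r) (hrn : r ≤ n) (I : Finset (Fin n)) (hI : I.card = r)
    (idx : ℕ → Fin n) (v : ℕ → Fin m → ℝ) (idx' : ℕ → {i // i ∈ I}) (v' : ℕ → Fin m → ℝ)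
    (hseq : IsPivotSeq A idx v r)
    (hseq' : IsPivotSeq (Matrix.of fun (i : {i // i ∈ I}) (j : Fin m) => A i j) idx' v' r)
    (hkey : ∀ s, 1 ≤ s → s ≤ r →
      (∀ t, 1 ≤ t → t < s → idx t = (idx' t : Fin n) ∧ v t = v' t) → v s = v' s →
      |pdot (v s) (A (idx s))| ≤ |pdot (v s) (A (idx' s : Fin n))|) :
    ∀ s, 1 ≤ s → s ≤ r → idx s = (idx' s : Fin n) ∧ v s = v' s := by
  intro s
  induction s using Nat.strong_induction_on with
  | _ s IH =>
  intro hs1 hsr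
  obtain ⟨c, rfl⟩ : ∃ c, s = c + 1 := ⟨s - 1, by omega⟩
  have hIH : ∀ t, 1 ≤ t → t < c + 1 → idx t = (idx' t : Fin n) ∧ v t = v' t :=
    fun t h1 h2 => IH t h2 h1 (by omega)
  have hc : c + 1 ≤ m := by omega
  set e : Fin c → Fin n := fun t => (idx' ((t : ℕ) + 1) : Fin n) with he_def
  have he : Function.Injective e := by
    intro t1 t2 h12
    by_contra hne
    have h1lt := t1.isLt
    have h2lt := t2.isLt
    have hne' : (t1 : ℕ) ≠ (t2 : ℕ) := fun hh => hne (Fin.ext hh)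
    have heq : idx' ((t1 : ℕ) + 1) = idx' ((t2 : ℕ) + 1) := Subtype.coe_injective h12
    rcases lt_or_gt_of_ne hne' with hlt | hlt
    · exact (hseq' ((t2 : ℕ) + 1) (by omega) (by omega)).2.2.2.1 ((t1 : ℕ) + 1)
        (by omega) (by omega) heq.symm
    · exact (hseq' ((t1 : ℕ) + 1) (by omega) (by omega)).2.2.2.1 ((t2 : ℕ) + 1)
        (by omega) (by omega) heq
  obtain ⟨hv0, hv1, horth, hdist, hmax⟩ := hseq (c + 1) hs1 hsr
  obtain ⟨hv0', hv1', horth', hdist', hmax'⟩ := hseq' (c + 1) hs1 hsr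
  have hdet : (Mmat A hc e).det ≠ 0 := (hG c hc e he).1
  have horthe : ∀ t : Fin c, pdot (v (c + 1)) (A (e t)) = 0 := by
    intro t
    have h := horth ((t : ℕ) + 1) (by omega) (by have := t.isLt; omega)
    rw [(hIH ((t : ℕ) + 1) (by omega) (by have := t.isLt; omega)).1] at h
    exact h
  have horthe' : ∀ t : Fin c, pdot (v' (c + 1)) (A (e t)) = 0 := by
    intro t
    exact horth' ((t : ℕ) + 1) (by omega) (by have := t.isLt; omega)
  have hveq : v (c + 1) = v' (c + 1) :=
    pivot_vec_unique A hc e hdet _ _ hv0 (fun j hj => hv1 j (by omega)) horthe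
      hv0' (fun j hj => hv1' j (by omega)) horthe'
  have hub : |pdot (v (c + 1)) (A (idx (c + 1)))| ≤
      |pdot (v (c + 1)) (A (idx' (c + 1) : Fin n))| := hkey (c + 1) hs1 hsr hIH hveq
  have hlb : |pdot (v (c + 1)) (A (idx' (c + 1) : Fin n))| ≤
      |pdot (v (c + 1)) (A (idx (c + 1)))| := by
    apply hmax
    intro t ht1 ht2
    rw [(hIH t ht1 ht2).1]
    exact fun hh => hdist' t ht1 ht2 (Subtype.coe_injective hh)
  have habs : |pdot (v (c + 1)) (A (idx (c + 1)))| =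
      |pdot (v (c + 1)) (A (idx' (c + 1) : Fin n))| := le_antisymm hub hlb
  have hidx : idx (c + 1) = (idx' (c + 1) : Fin n) := by
    by_contra hne
    have hni : ∀ t : Fin c, idx (c + 1) ≠ e t := by
      intro t
      have h := hdist ((t : ℕ) + 1) (by omega) (by have := t.isLt; omega)
      rw [(hIH ((t : ℕ) + 1) (by omega) (by have := t.isLt; omega)).1] at h
      exact h
    have hni' : ∀ t : Fin c, (idx' (c + 1) : Fin n) ≠ e t := by
      intro t hh
      exact hdist' ((t : ℕ) + 1) (by omega) (by have := t.isLt; omega)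
        (Subtype.coe_injective hh)
    obtain ⟨hd1, hd2⟩ := (hG c hc e he).2 (idx (c + 1)) (idx' (c + 1) : Fin n) hne hni hni'
    have hdetN1 := det_Nmat_eq A hc e (idx (c + 1)) (v (c + 1)) hv0
      (fun j hj => hv1 j (by omega)) horthe
    have hdetN2 := det_Nmat_eq A hc e (idx' (c + 1) : Fin n) (v (c + 1)) hv0
      (fun j hj => hv1 j (by omega)) horthe
    rcases abs_eq_abs.mp habs with h | h
    · exact hd1 (by rw [hdetN1, hdetN2, h])
    · exact hd2 (by rw [hdetN1, hdetN2, h, neg_mul])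
  exact ⟨hidx, hveq⟩

lemma main_det (hnm : n ≤ m) (A : Matrix (Fin n) (Fin m) ℝ) (hG : GoodMat A)
    (r : ℕ) (hr1 : 1 ≤ r) (hrn : r ≤ n) (I : Finset (Fin n)) (hI : I.card = r)
    (idx : ℕ → Fin n) (v : ℕ → Fin m → ℝ) (idx' : ℕ → {i // i ∈ I}) (v' : ℕ → Fin m → ℝ)
    (hseq : IsPivotSeq A idx v r)
    (hseq' : IsPivotSeq (Matrix.of fun (i : {i // i ∈ I}) (j : Fin m) => A i j) idx' v' r) :
    (((Finset.range r).image (fun s => idx (s + 1)) = I) ↔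
      (∀ s, 1 ≤ s → s ≤ r → idx s = (idx' s : Fin n) ∧ v s = v' s ∧
        Kpoly A idx v s =
          Kpoly (Matrix.of fun (i : {i // i ∈ I}) (j : Fin m) => A i j) idx' v' s)) ∧
    (((Finset.range r).image (fun s => idx (s + 1)) = I) ↔
      (∀ j : Fin n, j ∉ I →
        (A j) ∈ Kpoly (Matrix.of fun (i : {i // i ∈ I}) (j : Fin m) => A i j) idx' v' r)) := by
  set A' : Matrix {i // i ∈ I} (Fin m) ℝ :=
    Matrix.of fun (i : {i // i ∈ I}) (j : Fin m) => A i j with hA'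
  -- the common "key" hypothesis factory
  have key_of : (∀ s, 1 ≤ s → s ≤ r → idx s ∈ I ∨ A (idx s) ∈ Kpoly A' idx' v' r) →
      ∀ s, 1 ≤ s → s ≤ r →
        (∀ t, 1 ≤ t → t < s → idx t = (idx' t : Fin n) ∧ v t = v' t) → v s = v' s →
        |pdot (v s) (A (idx s))| ≤ |pdot (v s) (A (idx' s : Fin n))| := by
    intro hdi s hs1 hsr hIH hveq
    rcases hdi s hs1 hsr with hmem | hK
    · obtain ⟨_, _, _, hdist, _⟩ := hseq s hs1 hsr
      obtain ⟨_, _, _, _, hmax'⟩ := hseq' s hs1 hsr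
      have h := hmax' ⟨idx s, hmem⟩ ?_
      · rw [hveq]
        exact h
      · intro t ht1 ht2 hh
        have hcoe : idx s = (idx' t : Fin n) := congrArg Subtype.val hh
        rw [← (hIH t ht1 ht2).1] at hcoe
        exact hdist t ht1 ht2 hcoe
    · have h := hK s hs1 hsr
      rw [hveq]
      exact h
  -- from agreement of indices, the image identity
  have himg : (∀ s, 1 ≤ s → s ≤ r → idx s = (idx' s : Fin n)) →
      (Finset.range r).image (fun s => idx (s + 1)) = I := by
    intro hag
    apply Finset.eq_of_subset_of_card_le
    · intro x hx
      obtain ⟨s, hs, rfl⟩ := Finset.mem_image.mp hx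
      have hsr : s < r := Finset.mem_range.mp hs
      rw [hag (s + 1) (by omega) (by omega)]
      exact (idx' (s + 1)).2
    · have hinj : Set.InjOn (fun s => idx (s + 1)) (Finset.range r) := by
        intro a ha b hb hab
        simp only [Finset.coe_range, Set.mem_Iio] at ha hb
        by_contra hne
        rcases lt_or_gt_of_ne hne with hlt | hlt
        · exact (hseq (b + 1) (by omega) (by omega)).2.2.2.1 (a + 1) (by omega) (by omega)
            hab.symm
        · exact (hseq (a + 1) (by omega) (by omega)).2.2.2.1 (b + 1) (by omega) (by omega) hab
      rw [hI, Finset.card_image_of_injOn hinj, Finset.card_range]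
  -- (1) implies agreement
  have himp1 : (Finset.range r).image (fun s => idx (s + 1)) = I →
      ∀ s, 1 ≤ s → s ≤ r → idx s = (idx' s : Fin n) ∧ v s = v' s := by
    intro h1
    apply agree_of_key hnm A hG r hr1 hrn I hI idx v idx' v' hseq hseq'
    apply key_of
    intro s hs1 hsr
    left
    rw [← h1]
    refine Finset.mem_image.mpr ⟨s - 1, Finset.mem_range.mpr (by omega), ?_⟩
    congr 1
    omega
  -- (3) implies agreement
  have himp3 : (∀ j : Fin n, j ∉ I → (A j) ∈ Kpoly A' idx' v' r) →
      ∀ s, 1 ≤ s → s ≤ r → idx s = (idx' s : Fin n) ∧ v s = v' s := by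
    intro h3
    apply agree_of_key hnm A hG r hr1 hrn I hI idx v idx' v' hseq hseq'
    apply key_of
    intro s hs1 hsr
    by_cases hmem : idx s ∈ I
    · exact Or.inl hmem
    · exact Or.inr (h3 _ hmem)
  constructor
  · constructor
    · intro h1
      have hag := himp1 h1
      intro s hs1 hsr
      refine ⟨(hag s hs1 hsr).1, (hag s hs1 hsr).2, ?_⟩
      ext x
      simp only [Kpoly, Set.mem_setOf_eq]
      constructor
      · intro hx t ht1 hts
        have h12 := hag t ht1 (le_trans hts hsr)
        have h := hx t ht1 hts
        rw [h12.1, h12.2] at h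
        exact h
      · intro hx t ht1 hts
        have h12 := hag t ht1 (le_trans hts hsr)
        have h := hx t ht1 hts
        rw [h12.1, h12.2]
        exact h
    · intro h2
      exact himg fun s hs1 hsr => (h2 s hs1 hsr).1
  · constructor
    · intro h1
      have hag := himp1 h1
      intro j hj
      show ∀ s, 1 ≤ s → s ≤ r → |pdot (v' s) (A j)| ≤ |pdot (v' s) (A' (idx' s))|
      intro s hs1 hsr
      obtain ⟨_, _, _, _, hmax⟩ := hseq s hs1 hsr
      have h := hmax j ?_
      · have hs' := hag s hs1 hsr
        show |pdot (v' s) (A j)| ≤ |pdot (v' s) (A (idx' s : Fin n))|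
        rw [← hs'.2, ← hs'.1]
        exact h
      · intro t ht1 ht2 hh
        rw [(hag t ht1 (by omega)).1] at hh
        exact hj (hh ▸ (idx' t).2)
    · intro h3
      exact himg fun s hs1 hsr => (himp3 h3 s hs1 hsr).1

end Deterministic

end Aux

/-- For an `n×m` random matrix `B` (`m ≥ n`) with i.i.d. entries of continuous distribution,
`r ∈ [n]` and `I ⊆ [n]` with `|I| = r`, almost surely the following are equivalent:
(1) the set of the first `r` pivot rows of `B` is `I`;
(2) for all `s ∈ [r]`, the pivot data of `B` and of the row submatrix `B_{I,[m]}` agree;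
(3) every row of `B` outside `I` lies in `K_r(B_{I,[m]})`. -/
theorem stmt11 {n m : ℕ} (hnm : n ≤ m) (Ω : Type*) [MeasurableSpace Ω] (μ : Measure Ω)
    [IsProbabilityMeasure μ]
    (ν : Measure ℝ) [IsProbabilityMeasure ν] (hcont : ∀ a : ℝ, ν {a} = 0)
    (B : Ω → Matrix (Fin n) (Fin m) ℝ)
    (hlaw : Measure.map (fun ω => fun p : Fin n × Fin m => B ω p.1 p.2) μ =
      Measure.pi (fun _ : Fin n × Fin m => ν))
    (r : ℕ) (hr1 : 1 ≤ r) (hrn : r ≤ n) (I : Finset (Fin n)) (hI : I.card = r) :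
    ∀ᵐ ω ∂μ, ∀ (idx : ℕ → Fin n) (v : ℕ → Fin m → ℝ)
      (idx' : ℕ → {i // i ∈ I}) (v' : ℕ → Fin m → ℝ),
      IsPivotSeq (B ω) idx v r →
      IsPivotSeq (Matrix.of fun (i : {i // i ∈ I}) (j : Fin m) => B ω i j) idx' v' r →
      (((Finset.range r).image (fun s => idx (s + 1)) = I) ↔
        (∀ s, 1 ≤ s → s ≤ r → idx s = (idx' s : Fin n) ∧ v s = v' s ∧
          Kpoly (B ω) idx v s =
            Kpoly (Matrix.of fun (i : {i // i ∈ I}) (j : Fin m) => B ω i j) idx' v' s)) ∧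
      (((Finset.range r).image (fun s => idx (s + 1)) = I) ↔
        (∀ j : Fin n, j ∉ I →
          (B ω j) ∈ Kpoly (Matrix.of fun (i : {i // i ∈ I}) (j : Fin m) => B ω i j)
            idx' v' r)) := by
  haveI : MeasureTheory.NullSingletonClass ν := ⟨hcont⟩
  filter_upwards [ae_goodMat μ ν B hlaw] with ω hGood
  intro idx v idx' v' hseq hseq'
  exact main_det hnm (B ω) hGood r hr1 hrn I hI idx v idx' v' hseq hseq'
end
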